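/- Let V be a finite-dimensional real vector space. The space A(V) of algebraic curvature tensors on V equals the linear span of the set {α(A) : A an alternating bilinear form on V}, where α(A)(w,x,y,z) := 2A(w,x)A(y,z) + A(w,y)A(x,z) − A(w,z)A(x,y). -/

import Mathlib

/-!
Let `P` (`curvatureSymmetrizer` below) antisymmetrise a 4-linear form in the slot pairs `(0,1)` and
`(2,3)` and then apply the polarisation `β(A, B) = α(A + B) - α(A) - α(B)`. On a product
`f₀ ⊗ f₁ ⊗ f₂ ⊗ f₃` of linear forms it gives `β(f₀ ∧ f₁, f₂ ∧ f₃)`, a combination of three values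
of `α` at skew forms; since such products span all 4-linear forms on a finite-dimensional space,
the range of `P` lies in the span of the `α(A)`. On the other hand the antisymmetries, the pair
symmetry and the Bianchi identity give `P R = 24 R` for every algebraic curvature tensor `R`.
-/

open MultilinearMap Module Submodule

namespace AlgebraicCurvature

local notation "𝕋" K:max V:max => MultilinearMap K (fun _ : Fin 4 => V) K

section CommRing

variable {K V : Type*} [CommRing K] [AddCommGroup V] [Module K V]

lemma ext_iff_vec {T T' : 𝕋 K V} :
    T = T' ↔ ∀ w x y z : V, T ![w, x, y, z] = T' ![w, x, y, z] := by
  refine ⟨fun h _ _ _ _ => h ▸ rfl, fun h => MultilinearMap.ext fun v => ?_⟩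
  have hv : ![v 0, v 1, v 2, v 3] = v := by funext i; fin_cases i <;> rfl
  rw [← hv, h]

noncomputable def permArgs (σ : Fin 4 → Fin 4) (hσ : σ.Bijective := by decide) :
    𝕋 K V →ₗ[K] 𝕋 K V :=
  (domDomCongrLinearEquiv K K V K (Equiv.ofBijective σ hσ)).toLinearMap

@[simp] lemma permArgs_apply (σ : Fin 4 → Fin 4) (hσ : σ.Bijective) (T : 𝕋 K V) (w x y z : V) :
    permArgs σ hσ T ![w, x, y, z] = T ![![w, x, y, z] (σ 0), ![w, x, y, z] (σ 1),
      ![w, x, y, z] (σ 2), ![w, x, y, z] (σ 3)] :=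
  congrArg T (by funext i; fin_cases i <;> rfl)

def bilinProd (A B : V →ₗ[K] V →ₗ[K] K) : 𝕋 K V where
  toFun v := A (v 0) (v 1) * B (v 2) (v 3)
  map_update_add' := by
    intro _ v i a b
    obtain rfl : ‹DecidableEq (Fin 4)› = instDecidableEqFin 4 := Subsingleton.elim _ _
    fin_cases i <;>
      simp only [Fin.zero_eta, Fin.mk_one, Fin.reduceFinMk, Fin.isValue, ne_eq, Fin.reduceEq,
        not_false_eq_true, Function.update_self, Function.update_of_ne, map_add,
        LinearMap.add_apply] <;>
      ring
  map_update_smul' := by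
    intro _ v i c a
    obtain rfl : ‹DecidableEq (Fin 4)› = instDecidableEqFin 4 := Subsingleton.elim _ _
    fin_cases i <;>
      simp only [Fin.zero_eta, Fin.mk_one, Fin.reduceFinMk, Fin.isValue, ne_eq, Fin.reduceEq,
        not_false_eq_true, Function.update_self, Function.update_of_ne, map_smul,
        LinearMap.smul_apply, smul_eq_mul] <;>
      ring

@[simp] lemma bilinProd_apply (A B : V →ₗ[K] V →ₗ[K] K) (w x y z : V) :
    bilinProd A B ![w, x, y, z] = A w x * B y z := rfl

-- The parentheses keep `bilinProd A A` from being taken as the auto-param `hσ`.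
noncomputable def alpha (A : V →ₗ[K] V →ₗ[K] K) : 𝕋 K V :=
  2 • bilinProd A A + (permArgs ![0, 2, 1, 3]) (bilinProd A A)
    - (permArgs ![0, 3, 1, 2]) (bilinProd A A)

@[simp] lemma alpha_apply (A : V →ₗ[K] V →ₗ[K] K) (w x y z : V) :
    alpha A ![w, x, y, z] = 2 * A w x * A y z + A w y * A x z - A w z * A x y := by
  simp [alpha, mul_assoc]

variable (K V) in
def curvatureTensors : Submodule K (𝕋 K V) where
  carrier := {R |
    (∀ w x y z : V, R ![w, x, y, z] = - R ![w, x, z, y]) ∧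
    (∀ w x y z : V, R ![w, x, y, z] = R ![y, z, w, x]) ∧
    (∀ w x y z : V, R ![w, x, y, z] + R ![w, y, z, x] + R ![w, z, x, y] = 0)}
  zero_mem' := by simp
  add_mem' := by
    rintro R S ⟨hR₁, hR₂, hR₃⟩ ⟨hS₁, hS₂, hS₃⟩
    refine ⟨fun w x y z => ?_, fun w x y z => ?_, fun w x y z => ?_⟩ <;>
      simp only [add_apply]
    · linear_combination hR₁ w x y z + hS₁ w x y z
    · linear_combination hR₂ w x y z + hS₂ w x y z
    · linear_combination hR₃ w x y z + hS₃ w x y z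
  smul_mem' := by
    rintro c R ⟨hR₁, hR₂, hR₃⟩
    refine ⟨fun w x y z => ?_, fun w x y z => ?_, fun w x y z => ?_⟩ <;>
      simp only [smul_apply, smul_eq_mul]
    · linear_combination c * hR₁ w x y z
    · linear_combination c * hR₂ w x y z
    · linear_combination c * hR₃ w x y z

lemma alpha_mem_curvatureTensors {A : V →ₗ[K] V →ₗ[K] K} (hA : ∀ x y, A x y = - A y x) :
    alpha A ∈ curvatureTensors K V := by
  refine ⟨fun w x y z => ?_, fun w x y z => ?_, fun w x y z => ?_⟩ <;> simp only [alpha_apply]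
  · rw [hA z y]; ring
  · rw [hA y w, hA z x, hA y x, hA z w]; ring
  · rw [hA z x, hA y x, hA z y]; ring

noncomputable def altPairs : 𝕋 K V →ₗ[K] 𝕋 K V :=
  LinearMap.id - permArgs ![1, 0, 2, 3] - permArgs ![0, 1, 3, 2] + permArgs ![1, 0, 3, 2]

lemma altPairs_apply (T : 𝕋 K V) (w x y z : V) :
    altPairs T ![w, x, y, z] =
      T ![w, x, y, z] - T ![x, w, y, z] - T ![w, x, z, y] + T ![x, w, z, y] := by
  simp [altPairs]

noncomputable def curvatureSymmetrizer : 𝕋 K V →ₗ[K] 𝕋 K V :=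
  (2 • (LinearMap.id + permArgs ![2, 3, 0, 1]) + permArgs ![0, 2, 1, 3] + permArgs ![1, 3, 0, 2]
    - permArgs ![0, 3, 1, 2] - permArgs ![1, 2, 0, 3]) ∘ₗ altPairs

lemma curvatureSymmetrizer_apply (T : 𝕋 K V) (w x y z : V) :
    curvatureSymmetrizer T ![w, x, y, z] =
      2 * (altPairs T ![w, x, y, z] + altPairs T ![y, z, w, x]) + altPairs T ![w, y, x, z]
        + altPairs T ![x, z, w, y] - altPairs T ![w, z, x, y] - altPairs T ![x, y, w, z] := by
  simp [curvatureSymmetrizer, mul_add]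

lemma altPairs_of_mem {R : 𝕋 K V} (hR : R ∈ curvatureTensors K V) : altPairs R = 4 • R := by
  obtain ⟨h₁, h₂, -⟩ := hR
  have h₀ (w x y z : V) : R ![x, w, y, z] = - R ![w, x, y, z] := by
    rw [h₂, h₁, ← h₂]
  refine ext_iff_vec.2 fun w x y z => ?_
  rw [altPairs_apply, smul_apply, nsmul_eq_mul]
  linear_combination -h₀ w x y z - 2 * h₁ w x y z + h₀ w x z y

lemma curvatureSymmetrizer_of_mem {R : 𝕋 K V} (hR : R ∈ curvatureTensors K V) :
    curvatureSymmetrizer R = 24 • R := by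
  refine ext_iff_vec.2 fun w x y z => ?_
  simp only [curvatureSymmetrizer_apply, altPairs_of_mem hR, smul_apply, nsmul_eq_mul]
  obtain ⟨h₁, h₂, h₃⟩ := hR
  linear_combination 4 * (-2 * h₂ w x y z + h₂ x z w y - h₂ x y w z + 2 * h₁ w y x z
    - 2 * h₃ w x y z)

def wedge (f g : Dual K V) : V →ₗ[K] V →ₗ[K] K := f.smulRight g - g.smulRight f

@[simp] lemma wedge_apply (f g : Dual K V) (x y : V) : wedge f g x y = f x * g y - g x * f y :=
  rfl

lemma curvatureSymmetrizer_prod (f : Fin 4 → Dual K V) :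
    curvatureSymmetrizer ((MultilinearMap.mkPiAlgebra K (Fin 4) K).compLinearMap f)
      = alpha (wedge (f 0) (f 1) + wedge (f 2) (f 3)) - alpha (wedge (f 0) (f 1))
        - alpha (wedge (f 2) (f 3)) := by
  refine ext_iff_vec.2 fun w x y z => ?_
  simp only [curvatureSymmetrizer_apply, altPairs_apply, compLinearMap_apply, mkPiAlgebra_apply,
    Fin.prod_univ_four, Matrix.cons_val, sub_apply, alpha_apply, LinearMap.add_apply, wedge_apply]
  ring

lemma span_prod_eq_top {ι : Type*} [Fintype ι] [Module.Free K V] [Module.Finite K V] :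
    span K (Set.range fun f : ι → Dual K V =>
      (MultilinearMap.mkPiAlgebra K ι K).compLinearMap f) = ⊤ := by
  let b := Module.Free.chooseBasis K V
  rw [eq_top_iff, ← (Basis.multilinearMap (fun _ : ι => b) (Basis.singleton Unit K)).span_eq]
  refine span_mono (Set.range_subset_iff.2 fun i => ⟨fun j => b.coord (i.1 j), ?_⟩)
  ext v
  simp [Basis.multilinearMap_apply_apply]

lemma range_curvatureSymmetrizer_le [Module.Free K V] [Module.Finite K V] :
    LinearMap.range curvatureSymmetrizer ≤
      span K (alpha '' {A : V →ₗ[K] V →ₗ[K] K | ∀ x y, A x y = - A y x}) := by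
  rw [LinearMap.range_eq_map, ← span_prod_eq_top, map_span, span_le]
  rintro _ ⟨_, ⟨f, rfl⟩, rfl⟩
  rw [curvatureSymmetrizer_prod]
  refine sub_mem (sub_mem ?_ ?_) ?_ <;>
    exact subset_span ⟨_, fun x y => by simp only [LinearMap.add_apply, wedge_apply]; ring, rfl⟩

end CommRing

theorem span_alpha_eq_curvatureTensors {K V : Type*} [Field K] [CharZero K] [AddCommGroup V]
    [Module K V] [FiniteDimensional K V] :
    span K (alpha '' {A : V →ₗ[K] V →ₗ[K] K | ∀ x y, A x y = - A y x}) = curvatureTensors K V := by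
  refine le_antisymm (span_le.2 ?_) fun R hR => ?_
  · rintro _ ⟨A, hA, rfl⟩
    exact alpha_mem_curvatureTensors hA
  · have hR_eq : R = (24 : K)⁻¹ • curvatureSymmetrizer R := by
      rw [curvatureSymmetrizer_of_mem hR, ← Nat.cast_smul_eq_nsmul K, smul_smul, Nat.cast_ofNat,
        inv_mul_cancel₀ (by norm_num), one_smul]
    rw [hR_eq]
    exact smul_mem _ _ (range_curvatureSymmetrizer_le ⟨R, rfl⟩)

end AlgebraicCurvature

open AlgebraicCurvature

theorem stmt_1 (V : Type) [AddCommGroup V] [Module ℝ V] [FiniteDimensional ℝ V] :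
    {R : MultilinearMap ℝ (fun _ : Fin 4 => V) ℝ |
      (∀ w x y z : V, R ![w, x, y, z] = - R ![w, x, z, y]) ∧
      (∀ w x y z : V, R ![w, x, y, z] = R ![y, z, w, x]) ∧
      (∀ w x y z : V, R ![w, x, y, z] + R ![w, y, z, x] + R ![w, z, x, y] = 0)} =
    ↑(Submodule.span ℝ {T : MultilinearMap ℝ (fun _ : Fin 4 => V) ℝ |
      ∃ A : V →ₗ[ℝ] V →ₗ[ℝ] ℝ, (∀ x y : V, A x y = - A y x) ∧
        ∀ w x y z : V,
          T ![w, x, y, z] = 2 * A w x * A y z + A w y * A x z - A w z * A x y}) := by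
  have hS : {T : MultilinearMap ℝ (fun _ : Fin 4 => V) ℝ |
      ∃ A : V →ₗ[ℝ] V →ₗ[ℝ] ℝ, (∀ x y : V, A x y = - A y x) ∧
        ∀ w x y z : V, T ![w, x, y, z] = 2 * A w x * A y z + A w y * A x z - A w z * A x y}
      = alpha '' {A | ∀ x y, A x y = - A y x} := by
    ext T
    refine exists_congr fun A => and_congr_right fun _ => ?_
    simp only [eq_comm (a := alpha A), ext_iff_vec, alpha_apply]
  rw [hS, span_alpha_eq_curvatureTensors]
  rfl
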